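/- Let n ≥ 2 and let G₁, ..., Gₙ be rational functions Bᵢ/Aᵢ in lowest terms with Aᵢ monic, pairwise coprime, and deg Aᵢ ≥ 1. Then there is no open set of parameter vectors β with all βᵢ ≠ 0 on which the zeros of G(β) := Σᵢ βᵢGᵢ are independent of β, i.e., on which the numerator N(β) = Σᵢ βᵢBᵢ∏_{j≠i}Aⱼ is, up to scalar multiples, independent of β; that is, the zeros of the parallel combination must vary with β. -/
import Mathlib

open Polynomial

private lemma aux_indep {n : ℕ} (A B : Fin n → Polynomial ℝ)
    (hdeg : ∀ i, 1 ≤ (A i).natDegree)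
    (hco : ∀ i, IsCoprime (A i) (B i))
    (hpair : ∀ i j, i ≠ j → IsCoprime (A i) (A j))
    (d : Fin n → ℝ)
    (h : ∑ i, Polynomial.C (d i) * B i * ∏ j ∈ Finset.univ.erase i, A j = 0)
    (k : Fin n) : d k = 0 := by
  by_contra hdk
  have hdvd : A k ∣ C (d k) * B k * ∏ j ∈ Finset.univ.erase k, A j := by
    have h1 : ∀ i ∈ Finset.univ.erase k,
        A k ∣ C (d i) * B i * ∏ j ∈ Finset.univ.erase i, A j := by
      intro i hi
      exact Dvd.dvd.mul_left (Finset.dvd_prod_of_mem _ (by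
        simp [Finset.mem_erase, (Finset.mem_erase.mp hi).1.symm])) _
    have h2 : A k ∣ ∑ i ∈ Finset.univ.erase k,
        C (d i) * B i * ∏ j ∈ Finset.univ.erase i, A j := Finset.dvd_sum h1
    have h3 : C (d k) * B k * ∏ j ∈ Finset.univ.erase k, A j
        = -∑ i ∈ Finset.univ.erase k, C (d i) * B i * ∏ j ∈ Finset.univ.erase i, A j := by
      have := Finset.add_sum_erase Finset.univ
        (fun i => C (d i) * B i * ∏ j ∈ Finset.univ.erase i, A j) (Finset.mem_univ k)
      rw [h] at this
      exact eq_neg_of_add_eq_zero_left this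
    rw [h3]; exact h2.neg_right
  have hu : IsUnit (C (d k) : Polynomial ℝ) := isUnit_C.mpr (Ne.isUnit hdk)
  have hcop : IsCoprime (A k) (C (d k) * B k * ∏ j ∈ Finset.univ.erase k, A j) := by
    refine IsCoprime.mul_right (IsCoprime.mul_right ?_ (hco k)) ?_
    · exact ⟨0, C (d k)⁻¹, by simp [← C_mul, inv_mul_cancel₀ hdk]⟩
    · exact IsCoprime.prod_right fun j hj => hpair k j (Finset.mem_erase.mp hj).1.symm
  have hunit : IsUnit (A k) := hcop.isUnit_of_dvd' dvd_rfl hdvd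
  have h4 := Polynomial.natDegree_eq_zero_of_isUnit hunit
  have h5 := hdeg k
  omega

/-- With at least two genuinely distinct parallel branches (`Aᵢ` monic,
nontrivial, pairwise coprime, each `Bᵢ/Aᵢ` in lowest terms, `Bᵢ ≠ 0`), the
zeros of the parallel combination cannot be independent of the gain vector β:
the numerator `N(β) = Σᵢ βᵢBᵢ∏_{j≠i}Aⱼ` cannot be, up to scalar multiples,
constant on an open nonempty set of gain vectors with all components nonzero. -/
theorem stmt_19 (n : ℕ) (hn : 2 ≤ n) (A B : Fin n → Polynomial ℝ)
    (hA : ∀ i, (A i).Monic) (hdeg : ∀ i, 1 ≤ (A i).natDegree)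
    (hco : ∀ i, IsCoprime (A i) (B i)) (hB : ∀ i, B i ≠ 0)
    (hpair : ∀ i j, i ≠ j → IsCoprime (A i) (A j))
    (U : Set (Fin n → ℝ)) (hU : IsOpen U) (hUne : U.Nonempty)
    (hU0 : ∀ β ∈ U, ∀ i, β i ≠ 0)
    (hprop : ∀ β₁ ∈ U, ∀ β₂ ∈ U, ∃ c : ℝ, c ≠ 0 ∧
      (∑ i, Polynomial.C (β₁ i) * B i * ∏ j ∈ Finset.univ.erase i, A j) =
        Polynomial.C c * ∑ i, Polynomial.C (β₂ i) * B i * ∏ j ∈ Finset.univ.erase i, A j) :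
    False := by
  obtain ⟨β, hβ⟩ := hUne
  set i0 : Fin n := ⟨0, by omega⟩
  set i1 : Fin n := ⟨1, by omega⟩
  -- find a perturbed β'
  have hcont : Continuous fun t : ℝ => Function.update β i0 t :=
    continuous_pi fun i => by
      by_cases hi : i = i0
      · subst hi; simpa using continuous_id.congr fun t => (Function.update_self i0 t β).symm
      · simpa using (continuous_const (y := β i)).congr
          fun t => (Function.update_of_ne hi t β).symm
  have hopen : IsOpen ((fun t : ℝ => Function.update β i0 t) ⁻¹' U) := hU.preimage hcont
  have hmem : β i0 ∈ ((fun t : ℝ => Function.update β i0 t) ⁻¹' U) := by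
    simp [Function.update_eq_self, hβ]
  obtain ⟨ε, hε, hball⟩ := Metric.isOpen_iff.mp hopen _ hmem
  set t : ℝ := β i0 + ε / 2
  have ht : Function.update β i0 t ∈ U := by
    apply hball
    have hd : dist t (β i0) = ε / 2 := by
      rw [Real.dist_eq]
      simp only [t, add_sub_cancel_left]
      exact abs_of_pos (by linarith)
    rw [Metric.mem_ball, hd]; linarith
  set β' : Fin n → ℝ := Function.update β i0 t
  obtain ⟨c, hc0, hc⟩ := hprop β' ht β hβ
  have hzero : ∑ i, Polynomial.C (β' i - c * β i) * B i * ∏ j ∈ Finset.univ.erase i, A j = 0 := by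
    rw [Finset.mul_sum] at hc
    have : ∀ i, C (β' i - c * β i) * B i * ∏ j ∈ Finset.univ.erase i, A j
        = C (β' i) * B i * ∏ j ∈ Finset.univ.erase i, A j
          - C c * (C (β i) * B i * ∏ j ∈ Finset.univ.erase i, A j) := by
      intro i; simp [C_sub, C_mul]; ring
    simp only [this, Finset.sum_sub_distrib]
    rw [hc]; simp [Finset.mul_sum]
  have key := aux_indep A B hdeg hco hpair _ hzero
  have h1 := key i1
  have h0 := key i0
  have hne : i0 ≠ i1 := by simp [i0, i1, Fin.ext_iff]
  have hβ'1 : β' i1 = β i1 := Function.update_of_ne hne.symm _ _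
  have hβ'0 : β' i0 = t := Function.update_self _ _ _
  rw [hβ'1] at h1
  have hc1 : c = 1 := by
    have hb1 : β i1 ≠ 0 := hU0 β hβ i1
    have : β i1 * (1 - c) = 0 := by ring_nf; linarith [h1]
    rcases mul_eq_zero.mp this with h | h
    · exact absurd h hb1
    · linarith
  rw [hβ'0, hc1] at h0
  simp [t] at h0
  linarith
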